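/- Let G be an ω-precompact, sequentially h-complete Hausdorff topological group. Then the following are equivalent: (i) G is second countable; (ii) G has a countable network; (iii) G has countable pseudocharacter; (iv) G is metrizable. -/

import Mathlib

open Topology Pointwise

universe u

section Defs
variable (G : Type u) [Group G] [TopologicalSpace G] [IsTopologicalGroup G]

/-- Sequential completeness w.r.t. the canonical group uniformity. -/
def SeqComplete : Prop :=
  letI := IsTopologicalGroup.rightUniformSpace G
  ∀ u : ℕ → G, CauchySeq u → ∃ x, Filter.Tendsto u Filter.atTop (𝓝 x)

/-- `G` is sequentially h-complete: every continuous homomorphic image is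
sequentially complete. -/
def SeqHComplete : Prop :=
  ∀ (H : Type u) [Group H] [TopologicalSpace H] [IsTopologicalGroup H] [T2Space H]
    (f : G →* H), Continuous f → Function.Surjective f → SeqComplete H

/-- `G` is ω-precompact. -/
def OmegaPrecompact : Prop :=
  ∀ U ∈ 𝓝 (1 : G), ∃ F : Set G, F.Countable ∧ U * F = Set.univ

/-- `G` has countable pseudocharacter. -/
def CountablePseudocharacter : Prop :=
  ∃ s : ℕ → Set G, (∀ n, IsOpen (s n)) ∧ (⋂ n, s n) = ({1} : Set G)

/-- `G` is precompact. -/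
def GroupPrecompact : Prop :=
  ∀ U ∈ 𝓝 (1 : G), ∃ F : Set G, F.Finite ∧ U * F = Set.univ

/-- `G` is h-complete: every continuous homomorphic image is complete. -/
def HComplete : Prop :=
  ∀ (H : Type u) [Group H] [TopologicalSpace H] [IsTopologicalGroup H] [T2Space H]
    (f : G →* H), Continuous f → Function.Surjective f →
      letI := IsTopologicalGroup.rightUniformSpace H
      CompleteSpace H

/-- `G` is maximally almost periodic. -/
def MAP : Prop :=
  ∃ (K : Type u) (_ : Group K) (_ : TopologicalSpace K),
    ∃ (_ : IsTopologicalGroup K) (_ : T2Space K) (_ : CompactSpace K),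
      ∃ f : G →* K, Continuous f ∧ Function.Injective f

/-- `G` is minimally almost periodic. -/
def MinAP : Prop :=
  ∀ (K : Type u) [Group K] [TopologicalSpace K] [IsTopologicalGroup K] [T2Space K]
    [CompactSpace K] (f : G →* K), Continuous f → ∀ g : G, f g = 1

/-- `G` is c-compact. -/
def CCompact : Prop :=
  ∀ (H : Type u) [Group H] [TopologicalSpace H] [IsTopologicalGroup H] [T2Space H]
    (S : Subgroup (G × H)), IsClosed (S : Set (G × H)) →
      IsClosed ((S.map (MonoidHom.snd G H) : Subgroup H) : Set H)

/-- `G` is totally minimal. -/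
def TotallyMinimal : Prop :=
  ∀ (H : Type u) [Group H] [TopologicalSpace H] [IsTopologicalGroup H] [T2Space H]
    (f : G →* H), Continuous f → Function.Surjective f → IsOpenMap f

/-- `G` is minimal. -/
def MinimalGroup : Prop :=
  ∀ (H : Type u) [Group H] [TopologicalSpace H] [IsTopologicalGroup H] [T2Space H]
    (f : G →* H), Continuous f → Function.Bijective f → IsOpenMap f

end Defs

/-- `X` has a countable network. -/
def HasCountableNetwork (X : Type u) [TopologicalSpace X] : Prop :=
  ∃ N : Set (Set X), N.Countable ∧ ∀ U : Set X, IsOpen U → ∃ S ⊆ N, ⋃₀ S = U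

/-!
Countable networks and metrizability both give countable pseudocharacter, and second countability
gives both, so everything rests on: countable pseudocharacter implies second countability.

If `{1} = ⋂ n, s n`, Guran's argument uses ω-narrowness to shrink the `s n` to a
conjugation-stable sequence of symmetric neighbourhoods `U n` with `U (n+1)² ⊆ U n`. These form the
neighbourhood basis at `1` of a coarser Hausdorff first countable group topology, which is separable
(by ω-narrowness), hence second countable, and sequentially complete (by sequential h-completeness),
hence Baire. An open mapping theorem for sequentially complete ω-narrow first countable groups onto
Baire groups (Baire category, then successive approximation) shows that the coarser topology is the
original one: given `O ∈ 𝓝 1`, build a second such topology, finer than the first, in which `O` is a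
neighbourhood of `1`, and map it onto the first one.
-/

open Filter Set

section OmegaPrecompact

variable {G : Type u} [Group G] [TopologicalSpace G]

theorem OmegaPrecompact.exists_mul_range_eq_univ (hω : OmegaPrecompact G) {U : Set G}
    (hU : U ∈ 𝓝 1) : ∃ e : ℕ → G, U * range e = univ := by
  obtain ⟨F, hF, hUF⟩ := hω U hU
  have hFne : F.Nonempty := Nonempty.of_mul_right (hUF ▸ univ_nonempty)
  obtain ⟨e, rfl⟩ := hF.exists_eq_range hFne
  exact ⟨e, hUF⟩

theorem OmegaPrecompact.of_surjective {H : Type*} [Group H] [TopologicalSpace H]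
    (hω : OmegaPrecompact G) (f : G →* H) (hf : Continuous f)
    (hsurj : Function.Surjective f) : OmegaPrecompact H := by
  intro V hV
  obtain ⟨F, hF, hVF⟩ := hω (f ⁻¹' V) (hf.tendsto' 1 1 (map_one f) hV)
  refine ⟨f '' F, hF.image f, eq_univ_of_forall fun y => ?_⟩
  obtain ⟨x, rfl⟩ := hsurj y
  obtain ⟨a, ha, d, hd, rfl⟩ : x ∈ f ⁻¹' V * F := hVF ▸ mem_univ x
  exact ⟨f a, ha, f d, mem_image_of_mem f hd, (map_mul f a d).symm⟩

theorem OmegaPrecompact.exists_nhds_conj_subset [IsTopologicalGroup G] (hω : OmegaPrecompact G)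
    {U : Set G} (hU : U ∈ 𝓝 1) :
    ∃ W : ℕ → Set G, (∀ k, W k ∈ 𝓝 1) ∧ ∀ x, ∃ k, ∀ w ∈ W k, x * w * x⁻¹ ∈ U := by
  have hconj : Continuous fun p : G × G => p.1 * p.2 * p.1⁻¹ := by fun_prop
  have hU' : ∀ᶠ p : G × G in 𝓝 1 ×ˢ 𝓝 1, p.1 * p.2 * p.1⁻¹ ∈ U := by
    rw [← nhds_prod_eq]
    exact hconj.tendsto' (1, 1) 1 (by simp) hU
  obtain ⟨V, hV, hVU⟩ := (eventually_prod_self_iff (r := fun v y => v * y * v⁻¹ ∈ U)).1 hU'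
  obtain ⟨e, he⟩ := hω.exists_mul_range_eq_univ hV
  refine ⟨fun k => (fun w => e k * w * (e k)⁻¹) ⁻¹' V, fun k => ?_, fun x => ?_⟩
  · refine ((continuous_const_mul (e k)).mul continuous_const).tendsto' 1 1 ?_ hV
    simp
  · obtain ⟨v, hv, _, ⟨k, rfl⟩, rfl⟩ : x ∈ V * range e := he ▸ mem_univ x
    refine ⟨k, fun w hw => ?_⟩
    simpa [mul_assoc] using hVU v hv _ hw

end OmegaPrecompact

structure IsGroupBasisSeq {G : Type u} [Group G] (U : ℕ → Set G) : Prop where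
  one_mem : ∀ n, (1 : G) ∈ U n
  inv_eq : ∀ n, (U n)⁻¹ = U n
  mul_subset : ∀ n, U (n + 1) * U (n + 1) ⊆ U n
  conj_subset : ∀ x m, ∃ n, ∀ w ∈ U n, x * w * x⁻¹ ∈ U m

namespace IsGroupBasisSeq

variable {G : Type u} [Group G] {U : ℕ → Set G}

theorem antitone (hU : IsGroupBasisSeq U) : Antitone U :=
  antitone_nat_of_succ_le fun n x hx => hU.mul_subset n ⟨x, hx, 1, hU.one_mem _, mul_one x⟩

@[reducible] def groupFilterBasis (hU : IsGroupBasisSeq U) : GroupFilterBasis G where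
  sets := range U
  nonempty := range_nonempty U
  inter_sets := by
    rintro _ _ ⟨a, rfl⟩ ⟨b, rfl⟩
    exact ⟨U (max a b), mem_range_self _,
      subset_inter (hU.antitone (le_max_left a b)) (hU.antitone (le_max_right a b))⟩
  one' := by rintro _ ⟨n, rfl⟩; exact hU.one_mem n
  mul' := by rintro _ ⟨n, rfl⟩; exact ⟨U (n + 1), mem_range_self _, hU.mul_subset n⟩
  inv' := by
    rintro _ ⟨n, rfl⟩
    refine ⟨U n, mem_range_self _, fun x hx => ?_⟩
    rw [← hU.inv_eq n] at hx
    exact hx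
  conj' := by
    rintro x _ ⟨m, rfl⟩
    obtain ⟨n, hn⟩ := hU.conj_subset x m
    exact ⟨U n, mem_range_self _, hn⟩

def Topologized (_ : IsGroupBasisSeq U) : Type u := G

instance (hU : IsGroupBasisSeq U) : Group hU.Topologized := inferInstanceAs (Group G)

instance (hU : IsGroupBasisSeq U) : TopologicalSpace hU.Topologized := hU.groupFilterBasis.topology

instance (hU : IsGroupBasisSeq U) : IsTopologicalGroup hU.Topologized :=
  hU.groupFilterBasis.isTopologicalGroup

def toTopologized (hU : IsGroupBasisSeq U) : G →* hU.Topologized := MonoidHom.id G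

theorem toTopologized_bijective (hU : IsGroupBasisSeq U) : Function.Bijective hU.toTopologized :=
  Function.bijective_id

theorem nhds_one_hasBasis (hU : IsGroupBasisSeq U) :
    (𝓝 (1 : hU.Topologized)).HasBasis (fun _ => True) fun n => hU.toTopologized '' U n :=
  hU.groupFilterBasis.nhds_one_hasBasis.to_hasBasis
    (fun _ ⟨n, hn⟩ => ⟨n, trivial, by rw [← hn]; exact (image_id _).subset⟩)
    (fun n _ => ⟨U n, mem_range_self n, (image_id _).superset⟩)

instance (hU : IsGroupBasisSeq U) : FirstCountableTopology hU.Topologized := by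
  refine ⟨fun x => ?_⟩
  rw [← map_mul_left_nhds_one x]
  have := hU.nhds_one_hasBasis.isCountablyGenerated
  infer_instance

theorem t2Space (hU : IsGroupBasisSeq U) (hsep : ⋂ n, U n ⊆ {1}) : T2Space hU.Topologized := by
  refine IsTopologicalGroup.t2Space_of_one_sep fun x hx => ?_
  obtain ⟨n, hn⟩ : ∃ n, x ∉ U n := by
    by_contra! h
    exact hx (hsep (mem_iInter.2 h))
  exact ⟨_, hU.nhds_one_hasBasis.mem_of_mem trivial, fun ⟨y, hy, hyx⟩ => hn (hyx ▸ hy)⟩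

theorem continuous_toTopologized [TopologicalSpace G] [IsTopologicalGroup G]
    (hU : IsGroupBasisSeq U) (hnhds : ∀ n, U n ∈ 𝓝 1) :
    Continuous hU.toTopologized := by
  refine continuous_of_tendsto_nhds_one _ (hU.nhds_one_hasBasis.tendsto_right_iff.2 fun n _ => ?_)
  filter_upwards [hnhds n] with x hx using mem_image_of_mem _ hx

end IsGroupBasisSeq

section GuranSequence

variable {G : Type u} [Group G] [TopologicalSpace G] [IsTopologicalGroup G]

theorem OmegaPrecompact.exists_nhds_mul_subset_conj (hω : OmegaPrecompact G) {U : Set G}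
    (hU : U ∈ 𝓝 1) {Q : ℕ → Set G} (hQ : ∀ j, Q j ∈ 𝓝 1) :
    ∃ V ∈ 𝓝 1, ∃ Q' : ℕ → Set G, (∀ j, Q' j ∈ 𝓝 1) ∧ V⁻¹ = V ∧ V * V ⊆ U ∧ V ⊆ Q 0 ∧
      (∀ j, Q' j ⊆ Q (j + 1)) ∧ ∀ x, ∃ k, ∀ w ∈ Q' k, x * w * x⁻¹ ∈ V := by
  obtain ⟨V, hV, -, hVinv, hVV⟩ := exists_closed_nhds_one_inv_eq_mul_subset (inter_mem hU (hQ 0))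
  obtain ⟨W, hW, hWV⟩ := hω.exists_nhds_conj_subset hV
  have hV_sub : V ⊆ V * V := fun v hv => ⟨v, hv, 1, mem_of_mem_nhds hV, mul_one v⟩
  refine ⟨V, hV, fun j => Q (j + 1) ∩ W j, fun j => inter_mem (hQ _) (hW j), hVinv,
    hVV.trans inter_subset_left, (hV_sub.trans hVV).trans inter_subset_right,
    fun j => inter_subset_left, fun x => ?_⟩
  obtain ⟨k, hk⟩ := hWV x
  exact ⟨k, fun w hw => hk w hw.2⟩

/-- Each stage chooses its set inside the head `Q 0` of a queue of pending neighbourhoods, then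
merges its own Guran family into the shifted queue; so the `k`-th member of the family produced at
stage `n` is imposed at stage `n + k + 1`. -/
theorem OmegaPrecompact.exists_isGroupBasisSeq (hω : OmegaPrecompact G)
    {t : ℕ → Set G} (ht : ∀ n, t n ∈ 𝓝 1) :
    ∃ U : ℕ → Set G, IsGroupBasisSeq U ∧ (∀ n, U n ∈ 𝓝 1) ∧ ∀ n, U n ⊆ t n := by
  let Stage := {s : Set G × (ℕ → Set G) // s.1 ∈ 𝓝 1 ∧ ∀ j, s.2 j ∈ 𝓝 1}
  have step : ∀ s : Stage, ∃ s' : Stage, s'.1.1⁻¹ = s'.1.1 ∧ s'.1.1 * s'.1.1 ⊆ s.1.1 ∧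
      s'.1.1 ⊆ s.1.2 0 ∧ (∀ j, s'.1.2 j ⊆ s.1.2 (j + 1)) ∧
      ∀ x, ∃ k, ∀ w ∈ s'.1.2 k, x * w * x⁻¹ ∈ s'.1.1 := by
    rintro ⟨⟨U, Q⟩, hU, hQ⟩
    obtain ⟨V, hV, Q', hQ', h⟩ := hω.exists_nhds_mul_subset_conj hU hQ
    exact ⟨⟨(V, Q'), hV, hQ'⟩, h⟩
  choose next h_inv h_mul h_head h_shift h_conj using step
  let s (n : ℕ) : Stage := next^[n] ⟨(univ, t), univ_mem, ht⟩
  have hs (n : ℕ) : s (n + 1) = next (s n) := Function.iterate_succ_apply' ..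
  let U (n : ℕ) : Set G := (s (n + 1)).1.1
  let Q (n : ℕ) : ℕ → Set G := (s n).1.2
  have hQ (m i j : ℕ) : Q (m + i) j ⊆ Q m (j + i) := by
    induction i generalizing j with
    | zero => exact subset_rfl
    | succ i ih =>
      have h : Q (m + i + 1) j ⊆ Q (m + i) (j + 1) := by simpa only [Q, hs] using h_shift _ j
      exact h.trans ((ih (j + 1)).trans_eq (by rw [Nat.add_right_comm, Nat.add_assoc]))
  have hUQ (n : ℕ) : U n ⊆ Q n 0 := by simpa only [U, Q, hs] using h_head (s n)
  refine ⟨U, ⟨fun n => mem_of_mem_nhds (s (n + 1)).2.1, fun n => ?_, fun n => ?_,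
    fun x m => ?_⟩, fun n => (s (n + 1)).2.1, fun n => ?_⟩
  · simpa only [U, hs] using h_inv (s n)
  · simpa only [U, hs] using h_mul (s (n + 1))
  · obtain ⟨k, hk⟩ := h_conj (s m) x
    rw [← hs] at hk
    exact ⟨m + 1 + k, fun w hw => hk w ((hUQ _).trans (by simpa using hQ (m + 1) k 0) hw)⟩
  · have h : Q n 0 ⊆ Q 0 n := by simpa using hQ 0 n 0
    exact (hUQ n).trans h

end GuranSequence

section RightUniformity

open Uniformity

attribute [local instance] IsTopologicalGroup.rightUniformSpace

variable {G : Type u} [Group G] [TopologicalSpace G] [IsTopologicalGroup G]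

theorem IsTopologicalGroup.rightUniformity_isCountablyGenerated [FirstCountableTopology G] :
    (𝓤 G).IsCountablyGenerated :=
  Filter.comap.isCountablyGenerated _ _

theorem OmegaPrecompact.separableSpace [FirstCountableTopology G] (hω : OmegaPrecompact G) :
    TopologicalSpace.SeparableSpace G := by
  obtain ⟨b, hb⟩ := (𝓝 (1 : G)).exists_antitone_basis
  choose e he using fun n => hω.exists_mul_range_eq_univ (inv_mem_nhds_one G (hb.mem n))
  refine ⟨⟨⋃ n, range (e n), countable_iUnion fun n => countable_range _, fun x => ?_⟩⟩
  refine mem_closure_iff_nhds_one.2 fun V hV => ?_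
  obtain ⟨n, hn⟩ := hb.mem_iff.1 hV
  obtain ⟨a, ha, _, ⟨k, rfl⟩, rfl⟩ : x ∈ (b n)⁻¹ * range (e n) := he n ▸ mem_univ x
  exact ⟨e n k, mem_iUnion.2 ⟨n, k, rfl⟩, hn (by simpa using ha)⟩

theorem OmegaPrecompact.secondCountableTopology [FirstCountableTopology G]
    (hω : OmegaPrecompact G) : SecondCountableTopology G := by
  have := hω.separableSpace
  have := IsTopologicalGroup.rightUniformity_isCountablyGenerated (G := G)
  exact UniformSpace.secondCountable_of_separable G

theorem SeqComplete.baireSpace [FirstCountableTopology G] (h : SeqComplete G) :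
    BaireSpace G := by
  have := IsTopologicalGroup.rightUniformity_isCountablyGenerated (G := G)
  have : CompleteSpace G := UniformSpace.complete_of_cauchySeq_tendsto h
  infer_instance

theorem cauchySeq_of_mul_inv_mem {W : ℕ → Set G} (hW : (𝓝 1).HasAntitoneBasis W) {q : ℕ → G}
    (hq : ∀ n k, q (n + k) * (q n)⁻¹ ∈ W n) : CauchySeq q := by
  have hbasis : (𝓝 (1 : G)).HasBasis (fun _ => True) fun n => (W n)⁻¹ :=
    nhds_one_symm' (G := G) ▸ hW.1.inv
  refine ((hbasis.comap fun p : G × G => p.2 * p.1⁻¹).cauchySeq_iff').2 fun N _ =>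
    ⟨N, fun n hn => ?_⟩
  obtain ⟨k, rfl⟩ := Nat.exists_eq_add_of_le hn
  simpa using hq N k

end RightUniformity

theorem mul_inv_mem_of_forall_succ_mem {G : Type*} [Group G] {W : ℕ → Set G}
    (hW : ∀ n, W (n + 1) * W (n + 1) ⊆ W n) (h1 : ∀ n, (1 : G) ∈ W n) {q : ℕ → G}
    (hq : ∀ n, q (n + 1) * (q n)⁻¹ ∈ W (n + 1)) (n k : ℕ) : q (n + k) * (q n)⁻¹ ∈ W n := by
  induction k generalizing n with
  | zero => simpa using h1 n
  | succ k ih =>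
    have h := hW n (mul_mem_mul (ih (n + 1)) (hq n))
    rwa [mul_assoc, inv_mul_cancel_left, Nat.add_right_comm] at h

theorem tendsto_of_mem_closure_image {X Y : Type*} [TopologicalSpace X] [TopologicalSpace Y]
    [RegularSpace Y] {f : X → Y} {x : X} (hf : ContinuousAt f x) {W : ℕ → Set X}
    (hW : (𝓝 x).HasAntitoneBasis W) {z : ℕ → Y} (hz : ∀ n, z n ∈ closure (f '' W n)) :
    Tendsto z atTop (𝓝 (f x)) := by
  refine (closed_nhds_basis (f x)).tendsto_right_iff.2 fun N ⟨hN, hNc⟩ => ?_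
  filter_upwards [hW.eventually_subset (hf hN)] with n hn
  exact closure_minimal (image_subset_iff.2 hn) hNc (hz n)

section OpenMapping

variable {A B : Type u} [Group A] [TopologicalSpace A] [IsTopologicalGroup A]
  [Group B] [TopologicalSpace B] [IsTopologicalGroup B]

/-- By Baire category, one of the countably many translates of `closure (f '' V)` covering `B` has
nonempty interior. -/
theorem OmegaPrecompact.closure_image_mem_nhds_one [BaireSpace B] (hω : OmegaPrecompact A)
    {f : A →* B} (hf : Function.Surjective f) {U : Set A} (hU : U ∈ 𝓝 1) :
    closure (f '' U) ∈ 𝓝 1 := by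
  obtain ⟨V, hV, -, hVinv, hVU⟩ := exists_closed_nhds_one_inv_eq_mul_subset hU
  obtain ⟨e, he⟩ := hω.exists_mul_range_eq_univ hV
  set K := closure (f '' V)
  have hcover : ⋃ k, (· * (f (e k))⁻¹) ⁻¹' K = univ := by
    refine eq_univ_of_forall fun y => ?_
    obtain ⟨x, rfl⟩ := hf y
    obtain ⟨v, hv, _, ⟨k, rfl⟩, rfl⟩ : x ∈ V * range e := he ▸ mem_univ x
    exact mem_iUnion.2 ⟨k, subset_closure ⟨v, hv, by simp⟩⟩
  obtain ⟨k, z, hz⟩ := nonempty_interior_of_iUnion_of_closed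
    (fun k => isClosed_closure.preimage (continuous_mul_const (f (e k))⁻¹)) hcover
  set b := (f (e k))⁻¹
  have hzK : (· * b) ⁻¹' K ∈ 𝓝 z := mem_interior_iff_mem_nhds.1 hz
  refine mem_of_superset ((continuous_mul_const z).tendsto' 1 z (one_mul z) hzK) fun y hy => ?_
  have key := map_mem_closure₂ (f := fun a c : B => a * c⁻¹) (u := f '' U) (by fun_prop)
    (hy : y * z * b ∈ K) (interior_subset (s := (· * b) ⁻¹' K) hz) ?_
  · simpa [mul_assoc] using key
  · rintro _ ⟨v, hv, rfl⟩ _ ⟨w, hw, rfl⟩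
    refine ⟨v * w⁻¹, hVU (mul_mem_mul hv ?_), by simp⟩
    rw [← hVinv]
    exact inv_mem_inv.2 hw

/-- Successive approximation: a point of `closure (f '' W 1)` is `f` of the limit of products of
points `x n ∈ W (n + 1)`. -/
theorem closure_image_subset_image_closure [T2Space B] (hA : SeqComplete A) {f : A →* B}
    (hf : Continuous f) {W : ℕ → Set A} (hW : (𝓝 1).HasAntitoneBasis W)
    (hWW : ∀ n, W (n + 1) * W (n + 1) ⊆ W n) (hcl : ∀ n, closure (f '' W n) ∈ 𝓝 1) :
    closure (f '' W 1) ⊆ f '' closure (W 0) := by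
  intro y hy
  have step : ∀ n, ∀ z ∈ closure (f '' W (n + 1)),
      ∃ x ∈ W (n + 1), z * (f x)⁻¹ ∈ closure (f '' W (n + 2)) := by
    intro n z hz
    obtain ⟨_, ⟨x, hx, rfl⟩, hxz⟩ :=
      mem_closure_iff_nhds_one.1 hz _ (inv_mem_nhds_one B (hcl (n + 2)))
    exact ⟨x, hx, by simpa [div_eq_mul_inv] using hxz⟩
  choose! x hxW hxz using step
  let z : ℕ → B := fun n => Nat.rec y (fun n zn => zn * (f (x n zn))⁻¹) n
  let q : ℕ → A := fun n => Nat.rec 1 (fun n qn => x n (z n) * qn) n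
  have hz (n : ℕ) : z n ∈ closure (f '' W (n + 1)) := by
    induction n with
    | zero => exact hy
    | succ n ih => exact hxz n (z n) ih
  have hzq (n : ℕ) : z n * f (q n) = y := by
    induction n with
    | zero => simp [z, q]
    | succ n ih => simpa [z, q, mul_assoc] using ih
  have hq (n k : ℕ) : q (n + k) * (q n)⁻¹ ∈ W n :=
    mul_inv_mem_of_forall_succ_mem hWW (fun n => mem_of_mem_nhds (hW.mem n))
      (fun n => by simpa [q] using hxW n (z n) (hz n)) n k
  obtain ⟨p, hp⟩ := hA q (cauchySeq_of_mul_inv_mem hW hq)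
  have hz1 : Tendsto z atTop (𝓝 1) := by
    simpa using tendsto_of_mem_closure_image (f := f) hf.continuousAt hW fun n =>
      closure_mono (image_mono (hW.antitone n.le_succ)) (hz n)
  have hlim : Tendsto (fun n => z n * f (q n)) atTop (𝓝 (1 * f p)) :=
    hz1.mul ((hf.tendsto p).comp hp)
  simp only [hzq, one_mul] at hlim
  refine ⟨p, mem_closure_of_tendsto hp (Eventually.of_forall fun n => ?_),
    tendsto_nhds_unique tendsto_const_nhds hlim |>.symm⟩
  simpa [q] using hq 0 n

theorem OmegaPrecompact.image_mem_nhds_one_of_seqComplete [FirstCountableTopology A] [T2Space B]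
    [BaireSpace B] (hω : OmegaPrecompact A) (hA : SeqComplete A) {f : A →* B} (hf : Continuous f)
    (hsurj : Function.Surjective f) {O : Set A} (hO : O ∈ 𝓝 1) : f '' O ∈ 𝓝 1 := by
  obtain ⟨O', hO', hO'c, hO'O⟩ := exists_mem_nhds_isClosed_subset hO
  obtain ⟨u, hu, huu⟩ := IsTopologicalGroup.exists_antitone_basis_nhds_one (G := A)
  obtain ⟨N, hN⟩ := hu.mem_iff.1 hO'
  have hW : (𝓝 1).HasAntitoneBasis fun n => u (N + n) :=
    hu.comp_mono (fun _ _ h => Nat.add_le_add_left h N)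
      ((tendsto_add_atTop_nat N).congr fun n => add_comm n N)
  have hcl (n : ℕ) := hω.closure_image_mem_nhds_one hsurj (hW.mem n)
  refine mem_of_superset (hcl 1) ((closure_image_subset_image_closure hA hf hW
    (fun n => huu (N + n)) hcl).trans (image_mono ?_))
  exact (closure_minimal hN hO'c).trans hO'O

end OpenMapping
section Coarsening

variable {G : Type u} [Group G] [TopologicalSpace G] [IsTopologicalGroup G]

theorem OmegaPrecompact.exists_continuous_bijective (hω : OmegaPrecompact G) {t : ℕ → Set G}
    (ht : ∀ n, t n ∈ 𝓝 1) (hsep : ⋂ n, t n ⊆ {1}) :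
    ∃ (H : Type u) (_ : Group H) (_ : TopologicalSpace H) (_ : IsTopologicalGroup H)
      (_ : T2Space H) (_ : SecondCountableTopology H) (f : G →* H),
      Continuous f ∧ Function.Bijective f ∧ ∀ n, f '' t n ∈ 𝓝 1 := by
  obtain ⟨U, hU, hUnhds, hUt⟩ := hω.exists_isGroupBasisSeq ht
  have hcont := hU.continuous_toTopologized hUnhds
  refine ⟨hU.Topologized, inferInstance, inferInstance, inferInstance,
    hU.t2Space ((iInter_mono hUt).trans hsep),
    (hω.of_surjective _ hcont hU.toTopologized_bijective.2).secondCountableTopology,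
    hU.toTopologized, hcont, hU.toTopologized_bijective, fun n => ?_⟩
  exact mem_of_superset (hU.nhds_one_hasBasis.mem_of_mem trivial) (image_mono (hUt n))

/-- To see that `f` is open at `1`, compare it with a second coarsening `g` of the topology of `G`
in which `O` and the preimages of a neighbourhood basis of `1` in `H` are neighbourhoods of `1`:
then `f ∘ g⁻¹` is continuous, hence open by the open mapping theorem. -/
theorem OmegaPrecompact.image_mem_nhds_one_of_bijective {H : Type u} [Group H] [TopologicalSpace H]
    [IsTopologicalGroup H] [T2Space H] [FirstCountableTopology H] [BaireSpace H]
    (hω : OmegaPrecompact G) (hs : SeqHComplete G) {s : ℕ → Set G} (hs1 : ∀ n, s n ∈ 𝓝 1)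
    (hsep : ⋂ n, s n ⊆ {1}) {f : G →* H} (hf : Continuous f) (hbij : Function.Bijective f)
    {O : Set G} (hO : O ∈ 𝓝 1) : f '' O ∈ 𝓝 1 := by
  obtain ⟨b, hb⟩ := (𝓝 (1 : H)).exists_antitone_basis
  let t (n : ℕ) := s n ∩ f ⁻¹' b n ∩ O
  have ht (n : ℕ) : t n ∈ 𝓝 1 :=
    inter_mem (inter_mem (hs1 n) (hf.tendsto' 1 1 (map_one f) (hb.mem n))) hO
  obtain ⟨K, _, _, _, _, _, g, hg, hgbij, hgt⟩ := hω.exists_continuous_bijective ht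
    ((iInter_mono fun n => inter_subset_left.trans inter_subset_left).trans hsep)
  let e := MulEquiv.ofBijective g hgbij
  let φ : K →* H := f.comp e.symm.toMonoidHom
  have hφg (x : G) : φ (g x) = f x := congrArg f (e.symm_apply_apply x)
  have hφ : Continuous φ := by
    refine continuous_of_tendsto_nhds_one φ (hb.1.tendsto_right_iff.2 fun n _ => ?_)
    filter_upwards [hgt n] with _ ⟨x, hx, hxk⟩
    rw [← hxk, hφg]
    exact hx.1.2
  have hφs : Function.Surjective φ := hbij.2.comp e.symm.surjective
  have h := (hω.of_surjective g hg hgbij.2).image_mem_nhds_one_of_seqComplete (hs K g hg hgbij.2)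
    hφ hφs (mem_of_superset (hgt 0) (image_mono inter_subset_right))
  rwa [← image_comp, show ⇑φ ∘ ⇑g = ⇑f from funext hφg] at h

end Coarsening

theorem OmegaPrecompact.secondCountableTopology_of_countablePseudocharacter {G : Type u} [Group G]
    [TopologicalSpace G] [IsTopologicalGroup G] (hω : OmegaPrecompact G) (hs : SeqHComplete G)
    (h : CountablePseudocharacter G) : SecondCountableTopology G := by
  obtain ⟨s, hso, hs1⟩ := h
  have hmem (n : ℕ) : s n ∈ 𝓝 1 := (hso n).mem_nhds (mem_iInter.1 (hs1.ge rfl) n)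
  obtain ⟨H, _, _, _, _, _, f, hf, hbij, -⟩ := hω.exists_continuous_bijective hmem hs1.subset
  have := (hs H f hf hbij.2).baireSpace
  let e := MulEquiv.ofBijective f hbij
  have he : Continuous e.symm := by
    refine continuous_of_tendsto_nhds_one e.symm.toMonoidHom fun O hO => ?_
    rw [mem_map]
    refine mem_of_superset (hω.image_mem_nhds_one_of_bijective hs hmem hs1.subset hf hbij hO) ?_
    rintro _ ⟨x, hx, rfl⟩
    change e.symm (e x) ∈ O
    rwa [e.symm_apply_apply]
  exact (Homeomorph.mk e.toEquiv hf he).secondCountableTopology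

theorem hasCountableNetwork_of_secondCountableTopology (X : Type u) [TopologicalSpace X]
    [SecondCountableTopology X] : HasCountableNetwork X := by
  obtain ⟨b, hbc, -, hb⟩ := TopologicalSpace.exists_countable_basis X
  exact ⟨b, hbc, fun U hU => ⟨{s ∈ b | s ⊆ U}, sep_subset _ _, (hb.open_eq_sUnion' hU).symm⟩⟩

theorem HasCountableNetwork.isGδ_singleton {X : Type u} [TopologicalSpace X] [T1Space X]
    [RegularSpace X] (h : HasCountableNetwork X) (x : X) : IsGδ ({x} : Set X) := by
  obtain ⟨N, hNc, hN⟩ := h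
  convert IsGδ.biInter_of_isOpen (hNc.mono (sep_subset N fun S => x ∉ closure S))
    fun S _ => isClosed_closure.isOpen_compl
  refine Subset.antisymm (fun y hy => mem_iInter₂.2 fun S hS => ?_) fun y hy => ?_
  · rw [mem_singleton_iff.1 hy]
    exact hS.2
  · by_contra hyx
    obtain ⟨K, hK, hKc, hKx⟩ :=
      exists_mem_nhds_isClosed_subset (isOpen_compl_singleton.mem_nhds hyx)
    obtain ⟨T, hTN, hT⟩ := hN (interior K) isOpen_interior
    obtain ⟨S, hS, hyS⟩ : y ∈ ⋃₀ T := hT ▸ mem_interior_iff_mem_nhds.2 hK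
    have hSK : closure S ⊆ K :=
      closure_minimal ((subset_sUnion_of_mem hS).trans (hT ▸ interior_subset)) hKc
    exact mem_iInter₂.1 hy S ⟨hTN hS, fun hx => hKx (hSK hx) rfl⟩ (subset_closure hyS)

theorem countablePseudocharacter_iff_isGδ_singleton {G : Type u} [Group G] [TopologicalSpace G] :
    CountablePseudocharacter G ↔ IsGδ ({1} : Set G) := by
  simp only [CountablePseudocharacter, isGδ_iff_eq_iInter_nat, eq_comm]

/-- For ω-precompact sequentially h-complete groups: second countable,
countable network, countable pseudocharacter, and metrizable are equivalent. -/
theorem stmt4 (G : Type u) [Group G] [TopologicalSpace G] [IsTopologicalGroup G] [T2Space G]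
    (hω : OmegaPrecompact G) (hs : SeqHComplete G) :
    (SecondCountableTopology G ↔ HasCountableNetwork G) ∧
    (HasCountableNetwork G ↔ CountablePseudocharacter G) ∧
    (CountablePseudocharacter G ↔ TopologicalSpace.MetrizableSpace G) := by
  have hmet (_ : TopologicalSpace.MetrizableSpace G) : CountablePseudocharacter G :=
    countablePseudocharacter_iff_isGδ_singleton.2 (IsGδ.singleton 1)
  have hcpc (h : HasCountableNetwork G) : CountablePseudocharacter G :=
    countablePseudocharacter_iff_isGδ_singleton.2 (h.isGδ_singleton 1)
  have hsc := hω.secondCountableTopology_of_countablePseudocharacter hs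
  have hnet (_ : SecondCountableTopology G) : HasCountableNetwork G :=
    hasCountableNetwork_of_secondCountableTopology G
  exact ⟨⟨hnet, fun h => hsc (hcpc h)⟩, ⟨hcpc, fun h => hnet (hsc h)⟩,
    ⟨fun h => have := hsc h; inferInstance, hmet⟩⟩
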